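/- Let g ≥ 1 and m ≥ 1 be integers, let ω denote the standard symplectic (alternating, unimodular) bilinear form on ℤ^{2g}, and let a ∈ ℤ^{2g} be a vector such that the linear functional x ↦ ω(x, a) maps ℤ^{2g} onto ℤ. Let T : ℤ^{2g} → ℤ^{2g} be the homomorphism T(x) = x + m·ω(x, a)·a (the m-th power of the transvection along a). Then the cokernel of T − id, i.e., the group of coinvariants ℤ^{2g} / (T − id)(ℤ^{2g}), is isomorphic to ℤ^{2g−1} × (ℤ/mℤ). -/

import Mathlib

/-- The standard symplectic (alternating, unimodular) bilinear form on
`ℤ^{2g} = (Fin g → ℤ) × (Fin g → ℤ)`, given in the standard basis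
`e₁, f₁, …, e_g, f_g` by `ω (e i) (f i) = 1 = -ω (f i) (e i)` and all other
pairings zero: here the first factor carries the `e`-coordinates and the second
the `f`-coordinates. -/
def stdSymplectic (g : ℕ) (u v : (Fin g → ℤ) × (Fin g → ℤ)) : ℤ :=
  ∑ i, (u.1 i * v.2 i - u.2 i * v.1 i)

/-! A vector `x₀` with `ω(x₀, a) = 1` gives a functional `f = ω(x₀, ·)` with `f a = 1`, hence a
splitting `ℤ^{2g} ≃ ker f × ℤ`, `v ↦ (v - f v • a, f v)`, in which `ker f` is free of rank
`2g - 1`. Since `ω(·, a)` is onto `ℤ`, the image of `T - id` is exactly `mℤ • a`, which the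
splitting carries to `0 × mℤ`; so the coinvariants are `ker f × ℤ/mℤ`. -/

def stdSymplecticBilin (g : ℕ) :
    ((Fin g → ℤ) × (Fin g → ℤ)) →ₗ[ℤ] ((Fin g → ℤ) × (Fin g → ℤ)) →ₗ[ℤ] ℤ :=
  LinearMap.mk₂ ℤ (stdSymplectic g)
    (fun _ _ _ => by simp only [stdSymplectic, ← Finset.sum_add_distrib]; congr! 1; simp; ring)
    (fun _ _ _ => by simp only [stdSymplectic, smul_eq_mul, Finset.mul_sum]; congr! 1; simp; ring)
    (fun _ _ _ => by simp only [stdSymplectic, ← Finset.sum_add_distrib]; congr! 1; simp; ring)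
    (fun _ _ _ => by simp only [stdSymplectic, smul_eq_mul, Finset.mul_sum]; congr! 1; simp; ring)

namespace LinearMap

section Splitting

variable {R M : Type*} [CommRing R] [AddCommGroup M] [Module R M] (f : M →ₗ[R] R) {a : M}
  (hfa : f a = 1)

def projKerOfApplyEqOne : M →ₗ[R] ker f where
  toFun v := ⟨v - f v • a, by simp [hfa]⟩
  map_add' u v := by ext; simp only [map_add, add_smul, Submodule.coe_add]; abel
  map_smul' c v := by ext; simp [smul_sub, mul_smul]

@[simp]
theorem coe_projKerOfApplyEqOne (v : M) :
    (f.projKerOfApplyEqOne hfa v : M) = v - f v • a :=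
  rfl

def equivKerProdOfApplyEqOne : M ≃ₗ[R] ker f × R where
  __ := (f.projKerOfApplyEqOne hfa).prod f
  invFun p := p.1 + p.2 • a
  left_inv v := by simp
  right_inv := by
    rintro ⟨⟨w, hw : f w = 0⟩, n⟩
    ext <;> simp [hw, hfa]

@[simp]
theorem equivKerProdOfApplyEqOne_symm_apply (p : ker f × R) :
    (f.equivKerProdOfApplyEqOne hfa).symm p = p.1 + p.2 • a :=
  rfl

theorem finrank_ker_add_one_of_apply_eq_one [StrongRankCondition R] [Module.Free R M]
    [Module.Finite R M] [Module.Free R (ker f)] (hfa : f a = 1) :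
    Module.finrank R (ker f) + 1 = Module.finrank R M := by
  have : Module.Finite R (ker f) :=
    .of_surjective ((LinearMap.fst R _ R).comp (f.equivKerProdOfApplyEqOne hfa).toLinearMap)
      (Prod.fst_surjective.comp (f.equivKerProdOfApplyEqOne hfa).surjective)
  rw [(f.equivKerProdOfApplyEqOne hfa).finrank_eq, Module.finrank_prod, Module.finrank_self]

end Splitting

section Quotient

variable {M : Type*} [AddCommGroup M] (f : M →ₗ[ℤ] ℤ) {a : M} (hfa : f a = 1)
  (m : ℕ)

def toKerProdZModOfApplyEqOne : M →+ ker f × ZMod m :=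
  ((AddMonoidHom.id _).prodMap (Int.castAddHom (ZMod m))).comp
    (f.equivKerProdOfApplyEqOne hfa).toAddMonoidHom

theorem toKerProdZModOfApplyEqOne_surjective :
    Function.Surjective (f.toKerProdZModOfApplyEqOne hfa m) :=
  (Function.surjective_id.prodMap ZMod.intCast_surjective).comp
    (f.equivKerProdOfApplyEqOne hfa).surjective

theorem ker_toKerProdZModOfApplyEqOne :
    (f.toKerProdZModOfApplyEqOne hfa m).ker = AddSubgroup.zmultiples ((m : ℤ) • a) := by
  set e := f.equivKerProdOfApplyEqOne hfa
  ext v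
  obtain ⟨⟨w, n⟩, rfl⟩ := e.symm.surjective v
  have hΦ : f.toKerProdZModOfApplyEqOne hfa m (e.symm (w, n)) = (w, (n : ZMod m)) := by
    change (AddMonoidHom.id _).prodMap (Int.castAddHom (ZMod m)) (e (e.symm (w, n))) = _
    rw [e.apply_symm_apply]
    rfl
  rw [AddMonoidHom.mem_ker, hΦ, Prod.mk_eq_zero, ZMod.intCast_zmod_eq_zero_iff_dvd,
    AddSubgroup.mem_zmultiples_iff]
  constructor
  · rintro ⟨rfl, k, rfl⟩
    exact ⟨k, by simp only [e, equivKerProdOfApplyEqOne_symm_apply, ZeroMemClass.coe_zero,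
      zero_add, mul_comm (m : ℤ), mul_smul]⟩
  · rintro ⟨k, hk⟩
    have : ((0 : ker f), k * m) = (w, n) := e.symm.injective (by
      simp only [← hk, e, equivKerProdOfApplyEqOne_symm_apply, ZeroMemClass.coe_zero, zero_add,
        mul_smul])
    simp only [Prod.mk.injEq] at this
    exact ⟨this.1.symm, k, by rw [← this.2, mul_comm]⟩

noncomputable def quotientZMultiplesEquivOfApplyEqOne :
    M ⧸ AddSubgroup.zmultiples ((m : ℤ) • a) ≃+ ker f × ZMod m :=
  (QuotientAddGroup.quotientAddEquivOfEq (f.ker_toKerProdZModOfApplyEqOne hfa m).symm).trans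
    (QuotientAddGroup.quotientKerEquivOfSurjective _ (f.toKerProdZModOfApplyEqOne_surjective hfa m))

end Quotient

end LinearMap

theorem AddSubgroup.closure_range_mul_smul_eq_zmultiples {X M : Type*} [AddCommGroup M]
    {ψ : X → ℤ} (hψ : Function.Surjective ψ) (c : ℤ) (a : M) :
    closure (Set.range fun x => (c * ψ x) • a) = zmultiples (c • a) := by
  have : Set.range (fun x => (c * ψ x) • a) = zmultiples (c • a) := by
    rw [coe_zmultiples, ← hψ.range_comp]
    simp only [Function.comp_def, mul_comm c, mul_smul]
  rw [this, closure_eq]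

theorem coinvariants_of_power_of_transvection_general (g m : ℕ)
    (a : (Fin g → ℤ) × (Fin g → ℤ))
    (ha : Function.Surjective fun x => stdSymplectic g x a)
    (T : ((Fin g → ℤ) × (Fin g → ℤ)) → ((Fin g → ℤ) × (Fin g → ℤ)))
    (hT : ∀ x, T x = x + ((m : ℤ) * stdSymplectic g x a) • a) :
    Nonempty ((((Fin g → ℤ) × (Fin g → ℤ)) ⧸
        AddSubgroup.closure (Set.range fun x => T x - x))
      ≃+ ((Fin (2 * g - 1) → ℤ) × ZMod m)) := by
  obtain ⟨x₀, hfa⟩ := ha 1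
  set f := stdSymplecticBilin g x₀
  have hrank : Module.finrank ℤ (LinearMap.ker f) = Module.finrank ℤ (Fin (2 * g - 1) → ℤ) := by
    have := f.finrank_ker_add_one_of_apply_eq_one hfa
    simp only [Module.finrank_prod, Module.finrank_fintype_fun_eq_card, Fintype.card_fin] at this ⊢
    omega
  have hT' : (fun x => T x - x) = fun x => ((m : ℤ) * stdSymplectic g x a) • a := by
    funext x
    simp [hT]
  rw [hT', AddSubgroup.closure_range_mul_smul_eq_zmultiples ha]
  exact ⟨(f.quotientZMultiplesEquivOfApplyEqOne hfa m).trans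
    ((LinearEquiv.ofFinrankEq _ _ hrank).toAddEquiv.prodCongr (.refl _))⟩

/-- Let `ω` be the standard symplectic form on `ℤ^{2g}` and let `a ∈ ℤ^{2g}` be
such that `x ↦ ω x a` is onto `ℤ` (i.e. `a` is primitive). If
`T x = x + m·ω(x,a)·a` is the `m`-th power of the transvection along `a`, then
the group of coinvariants `ℤ^{2g} / (T - id)(ℤ^{2g})` is isomorphic to
`ℤ^{2g-1} × ℤ/mℤ`. -/
theorem coinvariants_of_power_of_transvection (g m : ℕ) (hg : 1 ≤ g) (hm : 1 ≤ m)
    (a : (Fin g → ℤ) × (Fin g → ℤ))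
    (ha : Function.Surjective fun x => stdSymplectic g x a)
    (T : ((Fin g → ℤ) × (Fin g → ℤ)) → ((Fin g → ℤ) × (Fin g → ℤ)))
    (hT : ∀ x, T x = x + ((m : ℤ) * stdSymplectic g x a) • a) :
    Nonempty ((((Fin g → ℤ) × (Fin g → ℤ)) ⧸
        AddSubgroup.closure (Set.range fun x => T x - x))
      ≃+ ((Fin (2 * g - 1) → ℤ) × ZMod m)) :=
  coinvariants_of_power_of_transvection_general g m a ha T hT
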